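/- arXiv:1705.02189 — 4 statements merged into one kernel-verified Lean document; each statement's English description precedes it below -/
import Mathlib

section
/- Let L ∈ ℝ^{n×n} be the Laplacian of a connected undirected weighted graph and let D ⊊ {1,…,n} be a nonempty proper subset of the nodes with complement C satisfying |C| ≥ 2. Partition L accordingly as L = [[L_CC, L_CD],[L_DC, L_DD]]. Then L_DD is invertible and the Schur complement L_CC − L_CD·L_DD⁻¹·L_DC is symmetric, positive semidefinite, has strictly positive diagonal entries, nonpositive off-diagonal entries, and zero row and column sums. -/
/-!
Order the nodes as `Dᶜ ⊕ D`, so that `L` becomes `fromBlocks L_CC L_CD L_DC L_DD`. The quadratic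
form of `L` is `½ ∑ a i j (x i - x j)²`, so `L` is a positive semidefinite matrix with nonpositive
off-diagonal entries whose form vanishes, by connectivity, only on constant vectors. A constant
vector vanishing on `C ≠ ∅` is zero, so `L_DD` is positive definite; being also a Z-matrix, it has
an entrywise nonnegative inverse, which makes the off-diagonal entries of `M` nonpositive.
`L 𝟙 = 0` passes to `M 𝟙 = 0`. Finally `M i i` is the form of `L` at the harmonic extension of the
`i`-th unit vector of `C`; this vector is nonconstant because `|C| ≥ 2`, so `M i i > 0`.
-/

open Finset Matrix

theorem SimpleGraph.Preconnected.eq_of_forall_adj {V α : Type*} {G : SimpleGraph V}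
    (hG : G.Preconnected) {f : V → α} (hf : ∀ u v, G.Adj u v → f u = f v) (u v : V) :
    f u = f v := by
  obtain ⟨w⟩ := hG u v
  induction w with
  | nil => rfl
  | cons h _ ih => exact (hf _ _ h).trans ih

section WeightedLaplacian

variable {ι : Type*} [Fintype ι] [DecidableEq ι] {a : ι → ι → ℝ}

def weightedLaplacian (a : ι → ι → ℝ) : Matrix ι ι ℝ :=
  fun i j => (if i = j then ∑ l, a i l else 0) - a i j

theorem weightedLaplacian_apply_of_ne {i j : ι} (h : i ≠ j) :
    weightedLaplacian a i j = -a i j := by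
  simp [weightedLaplacian, h]

theorem weightedLaplacian_mulVec (x : ι → ℝ) :
    weightedLaplacian a *ᵥ x = fun i => ∑ j, a i j * (x i - x j) := by
  ext i
  simp [weightedLaplacian, mulVec, dotProduct, sub_mul, mul_sub, sum_sub_distrib, ite_mul,
    sum_mul]

theorem weightedLaplacian_mulVec_one : weightedLaplacian a *ᵥ 1 = 0 := by
  ext i
  simp [weightedLaplacian_mulVec]

theorem weightedLaplacian_isHermitian (hsym : ∀ i j, a i j = a j i) :
    (weightedLaplacian a).IsHermitian := by
  refine isHermitian_iff_isSymm.mpr (IsSymm.ext fun i j => ?_)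
  by_cases h : i = j
  · rw [h]
  · rw [weightedLaplacian_apply_of_ne h, weightedLaplacian_apply_of_ne (Ne.symm h), hsym]

theorem dotProduct_weightedLaplacian_mulVec (hsym : ∀ i j, a i j = a j i) (x : ι → ℝ) :
    x ⬝ᵥ weightedLaplacian a *ᵥ x = (∑ i, ∑ j, a i j * (x i - x j) ^ 2) / 2 := by
  have hswap : ∑ i, ∑ j, x i * (a i j * (x i - x j)) =
      ∑ i, ∑ j, x j * (a i j * (x j - x i)) := by
    rw [sum_comm]
    simp_rw [hsym]
  rw [weightedLaplacian_mulVec, dotProduct]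
  simp_rw [mul_sum]
  rw [eq_div_iff two_ne_zero, mul_two]
  nth_rw 2 [hswap]
  rw [← sum_add_distrib]
  refine sum_congr rfl fun i _ => ?_
  rw [← sum_add_distrib]
  exact sum_congr rfl fun j _ => by ring

theorem weightedLaplacian_posSemidef (hsym : ∀ i j, a i j = a j i) (hnonneg : ∀ i j, 0 ≤ a i j) :
    (weightedLaplacian a).PosSemidef := by
  refine .of_dotProduct_mulVec_nonneg (weightedLaplacian_isHermitian hsym) fun x => ?_
  rw [star_trivial, dotProduct_weightedLaplacian_mulVec hsym]
  exact div_nonneg (sum_nonneg fun i _ => sum_nonneg fun j _ =>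
    mul_nonneg (hnonneg i j) (sq_nonneg _)) zero_le_two

theorem eq_of_dotProduct_weightedLaplacian_mulVec_eq_zero (hsym : ∀ i j, a i j = a j i)
    (hnonneg : ∀ i j, 0 ≤ a i j) (hconn : (SimpleGraph.fromRel fun i j => 0 < a i j).Connected)
    {x : ι → ℝ} (hx : x ⬝ᵥ weightedLaplacian a *ᵥ x = 0) (i j : ι) : x i = x j := by
  have hterm_nonneg : ∀ i j, 0 ≤ a i j * (x i - x j) ^ 2 := fun i j =>
    mul_nonneg (hnonneg i j) (sq_nonneg _)
  rw [dotProduct_weightedLaplacian_mulVec hsym, div_eq_zero_iff, or_iff_left two_ne_zero,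
    sum_eq_zero_iff_of_nonneg fun i _ => sum_nonneg fun j _ => hterm_nonneg i j] at hx
  have hedge : ∀ i j, 0 < a i j → x i = x j := fun i j hij => by
    have := (sum_eq_zero_iff_of_nonneg fun j _ => hterm_nonneg i j).mp (hx i (mem_univ i)) j
      (mem_univ j)
    rw [mul_eq_zero, or_iff_right hij.ne', sq_eq_zero_iff, sub_eq_zero] at this
    exact this
  refine hconn.preconnected.eq_of_forall_adj (fun u v huv => ?_) i j
  obtain ⟨-, h | h⟩ := (SimpleGraph.fromRel_adj _ _ _).mp huv
  exacts [hedge u v h, (hedge v u h).symm]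

end WeightedLaplacian

namespace Matrix

theorem eq_of_dotProduct_submatrix_mulVec_eq_zero {ι κ : Type*} [Fintype ι] [Fintype κ]
    {K : Matrix ι ι ℝ} (hK : ∀ x : ι → ℝ, x ⬝ᵥ K *ᵥ x = 0 → ∀ i j, x i = x j) (e : κ ≃ ι)
    {w : κ → ℝ} (hw : w ⬝ᵥ K.submatrix e e *ᵥ w = 0) (p q : κ) : w p = w q := by
  rw [submatrix_mulVec_equiv, ← comp_equiv_symm_dotProduct] at hw
  simpa using hK _ hw (e p) (e q)

theorem PosDef.nonneg_of_mulVec_nonneg {n : Type*} [Fintype n] {D : Matrix n n ℝ}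
    (hD : D.PosDef) (hZ : ∀ i j, i ≠ j → D i j ≤ 0) {x : n → ℝ} (hx : 0 ≤ D *ᵥ x) : 0 ≤ x := by
  have hdisjoint : ∀ k, x⁻ k * x⁺ k = 0 := fun k => by
    rcases le_total 0 (x k) with h | h
    · simp [negPart_eq_zero.mpr h]
    · simp [posPart_eq_zero.mpr h]
  -- the positive and negative parts of `x` interact only through nonpositive off-diagonal entries
  have hcross : x⁻ ⬝ᵥ D *ᵥ x⁺ ≤ 0 := by
    refine sum_nonpos fun k _ => ?_
    rw [mulVec, dotProduct, mul_sum]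
    refine sum_nonpos fun j _ => ?_
    by_cases hkj : k = j
    · rw [← hkj, mul_left_comm, hdisjoint, mul_zero]
    · exact mul_nonpos_of_nonneg_of_nonpos (negPart_nonneg x k)
        (mul_nonpos_of_nonpos_of_nonneg (hZ k j hkj) (posPart_nonneg x j))
  have hneg : x⁻ ⬝ᵥ D *ᵥ x⁻ ≤ 0 := by
    have hsplit : x⁻ ⬝ᵥ D *ᵥ x = x⁻ ⬝ᵥ D *ᵥ x⁺ - x⁻ ⬝ᵥ D *ᵥ x⁻ := by
      rw [← dotProduct_sub, ← mulVec_sub, posPart_sub_negPart]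
    linarith [dotProduct_nonneg_of_nonneg (negPart_nonneg x) hx]
  have : x⁻ = 0 := by
    by_contra h
    have := hD.dotProduct_mulVec_pos h
    rw [star_trivial] at this
    linarith
  rw [← posPart_sub_negPart x, this, sub_zero]
  exact posPart_nonneg x

theorem PosDef.inv_apply_nonneg {n : Type*} [Fintype n] [DecidableEq n]
    {D : Matrix n n ℝ} (hD : D.PosDef) (hZ : ∀ i j, i ≠ j → D i j ≤ 0) (i j : n) :
    0 ≤ D⁻¹ i j := by
  have hcol : D *ᵥ (D⁻¹ *ᵥ Pi.single j 1) = Pi.single j 1 := by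
    rw [mulVec_mulVec, mul_nonsing_inv _ ((isUnit_iff_isUnit_det D).mp hD.isUnit), one_mulVec]
  have := hD.nonneg_of_mulVec_nonneg hZ (hcol ▸ Pi.single_nonneg.mpr zero_le_one) i
  simpa [mulVec_single] using this

noncomputable def schurComplement {α m n : Type*} [CommRing α] [Fintype n] [DecidableEq n]
    (A : Matrix m m α) (B : Matrix m n α) (C : Matrix n m α) (D : Matrix n n α) : Matrix m m α :=
  A - B * D⁻¹ * C

section SchurComplement

variable {m n : Type*} [Fintype n]
  {A : Matrix m m ℝ} {B : Matrix m n ℝ} {C : Matrix n m ℝ} {D : Matrix n n ℝ}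

theorem posDef_of_posSemidef_fromBlocks [Fintype m] [Nonempty m]
    (hK : (fromBlocks A B C D).PosSemidef)
    (hker : ∀ v, v ⬝ᵥ fromBlocks A B C D *ᵥ v = 0 → ∀ p q, v p = v q) : D.PosDef := by
  obtain ⟨c⟩ := ‹Nonempty m›
  refine .of_dotProduct_mulVec_pos (isHermitian_fromBlocks_iff.mp hK.isHermitian).2.2.2
    fun y hy => ?_
  have hform : Sum.elim 0 y ⬝ᵥ fromBlocks A B C D *ᵥ Sum.elim 0 y = y ⬝ᵥ D *ᵥ y := by
    simp [fromBlocks_mulVec, sumElim_dotProduct_sumElim]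
  rw [star_trivial, ← hform]
  refine (hK.dotProduct_mulVec_nonneg _).lt_of_ne' fun h => hy (funext fun k => ?_)
  rw [star_trivial] at h
  simpa using hker _ h (Sum.inr k) (Sum.inl c)

variable [DecidableEq n]

theorem schurComplement_apply_nonpos (hZ : ∀ p q, p ≠ q → fromBlocks A B C D p q ≤ 0)
    (hD : D.PosDef) {i j : m} (hij : i ≠ j) : schurComplement A B C D i j ≤ 0 := by
  have hA : A i j ≤ 0 := hZ (.inl i) (.inl j) (Sum.inl_injective.ne hij)
  have hB : ∀ k, B i k ≤ 0 := fun k => hZ (.inl i) (.inr k) Sum.inl_ne_inr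
  have hC : ∀ l, C l j ≤ 0 := fun l => hZ (.inr l) (.inl j) Sum.inr_ne_inl
  have hDinv := hD.inv_apply_nonneg fun k l hkl => hZ (.inr k) (.inr l) (Sum.inr_injective.ne hkl)
  have hBDC : 0 ≤ (B * D⁻¹ * C) i j :=
    sum_nonneg fun l _ => mul_nonneg_of_nonpos_of_nonpos
      (sum_nonpos fun k _ => mul_nonpos_of_nonpos_of_nonneg (hB k) (hDinv k l)) (hC l)
  rw [schurComplement, Matrix.sub_apply]
  linarith

variable [Fintype m]

theorem schurComplement_mulVec_eq_zero (hD : IsUnit D.det) {x : m → ℝ} {y : n → ℝ}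
    (h : fromBlocks A B C D *ᵥ Sum.elim x y = 0) : schurComplement A B C D *ᵥ x = 0 := by
  have h₁ : A *ᵥ x + B *ᵥ y = 0 := funext fun i => by
    simpa [fromBlocks_mulVec] using congrFun h (Sum.inl i)
  have h₂ : C *ᵥ x + D *ᵥ y = 0 := funext fun i => by
    simpa [fromBlocks_mulVec] using congrFun h (Sum.inr i)
  have hy : D⁻¹ *ᵥ (C *ᵥ x) = -y := by
    rw [eq_neg_of_add_eq_zero_left h₂, mulVec_neg, mulVec_mulVec, nonsing_inv_mul _ hD,
      one_mulVec]
  rw [schurComplement, sub_mulVec, ← mulVec_mulVec, ← mulVec_mulVec, hy, mulVec_neg,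
    sub_neg_eq_add, h₁]

theorem schurComplement_posSemidef (hK : (fromBlocks A B C D).PosSemidef) (hD : D.PosDef) :
    (schurComplement A B C D).PosSemidef := by
  obtain rfl : Bᴴ = C := (isHermitian_fromBlocks_iff.mp hK.isHermitian).2.1
  have := hD.isUnit.invertible
  exact (PosDef.fromBlocks₂₂ A B hD).mp hK

theorem schurComplement_apply_self_pos [DecidableEq m] [Nontrivial m]
    (hK : (fromBlocks A B C D).PosSemidef)
    (hker : ∀ v, v ⬝ᵥ fromBlocks A B C D *ᵥ v = 0 → ∀ p q, v p = v q) (hD : D.PosDef) (i : m) :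
    0 < schurComplement A B C D i i := by
  obtain rfl : Bᴴ = C := (isHermitian_fromBlocks_iff.mp hK.isHermitian).2.1
  have := hD.isUnit.invertible
  obtain ⟨j, hji⟩ := exists_ne i
  set x : m → ℝ := Pi.single i 1
  -- `v` extends `x` by the minimiser of the form of `fromBlocks A B Bᴴ D` over the second block
  set v := Sum.elim x (-((D⁻¹ * Bᴴ) *ᵥ x))
  have hform : v ⬝ᵥ fromBlocks A B Bᴴ D *ᵥ v = schurComplement A B Bᴴ D i i := by
    have := schur_complement_eq₂₂ A B x (-((D⁻¹ * Bᴴ) *ᵥ x)) hD.isHermitian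
    simp only [add_neg_cancel, star_trivial, zero_vecMul, zero_dotProduct, zero_add,
      ← dotProduct_mulVec] at this
    rw [this]
    simp [schurComplement, x, mulVec_single]
  rw [← hform]
  refine (star_trivial v ▸ hK.dotProduct_mulVec_nonneg v).lt_of_ne' fun h => ?_
  simpa [v, x, hji] using hker v h (Sum.inl i) (Sum.inl j)

end SchurComplement

end Matrix

theorem schur_complement_of_connected_laplacian_general
    {n : ℕ} (a : Fin n → Fin n → ℝ)
    (hsym : ∀ i j, a i j = a j i)
    (hnonneg : ∀ i j, 0 ≤ a i j)
    (hconn : (SimpleGraph.fromRel fun i j => 0 < a i j).Connected)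
    (D : Finset (Fin n))
    (hC : 2 ≤ Dᶜ.card) :
    let L : Matrix (Fin n) (Fin n) ℝ := fun i j => (if i = j then ∑ l, a i l else 0) - a i j
    let LDD : Matrix {i // i ∈ D} {i // i ∈ D} ℝ := fun i j => L i.1 j.1
    let LCC : Matrix {i // i ∈ Dᶜ} {i // i ∈ Dᶜ} ℝ := fun i j => L i.1 j.1
    let LCD : Matrix {i // i ∈ Dᶜ} {i // i ∈ D} ℝ := fun i j => L i.1 j.1
    let LDC : Matrix {i // i ∈ D} {i // i ∈ Dᶜ} ℝ := fun i j => L i.1 j.1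
    let M : Matrix {i // i ∈ Dᶜ} {i // i ∈ Dᶜ} ℝ := LCC - LCD * LDD⁻¹ * LDC
    IsUnit LDD ∧
    M.IsSymm ∧
    M.PosSemidef ∧
    (∀ i, 0 < M i i) ∧
    (∀ i j, i ≠ j → M i j ≤ 0) ∧
    (∀ i, ∑ j, M i j = 0) ∧
    (∀ j, ∑ i, M i j = 0) := by
  intro L LDD LCC LCD LDC M
  let e : {i // i ∈ Dᶜ} ⊕ {i // i ∈ D} ≃ Fin n :=
    (Equiv.sumCongr (Equiv.refl _) (Equiv.subtypeEquivRight fun i => by simp)).trans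
      (Equiv.sumCompl (· ∈ Dᶜ))
  have hblocks : fromBlocks LCC LCD LDC LDD = (weightedLaplacian a).submatrix e e := by
    ext (i | i) (j | j) <;> rfl
  have hK : (fromBlocks LCC LCD LDC LDD).PosSemidef :=
    hblocks ▸ (posSemidef_submatrix_equiv e).mpr (weightedLaplacian_posSemidef hsym hnonneg)
  have hker : ∀ v, v ⬝ᵥ fromBlocks LCC LCD LDC LDD *ᵥ v = 0 → ∀ p q, v p = v q :=
    hblocks ▸ fun v => eq_of_dotProduct_submatrix_mulVec_eq_zero
      (fun x => eq_of_dotProduct_weightedLaplacian_mulVec_eq_zero hsym hnonneg hconn) e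
  have hZ : ∀ p q, p ≠ q → fromBlocks LCC LCD LDC LDD p q ≤ 0 := hblocks ▸ fun p q hpq => by
    simpa [weightedLaplacian_apply_of_ne (e.injective.ne hpq)] using hnonneg (e p) (e q)
  have hrow : fromBlocks LCC LCD LDC LDD *ᵥ Sum.elim 1 1 = 0 := by
    rw [Sum.elim_one_one, hblocks, submatrix_mulVec_equiv]
    simp [weightedLaplacian_mulVec_one]
  have : Nontrivial {i // i ∈ Dᶜ} :=
    Fintype.one_lt_card_iff_nontrivial.mp (by rw [Fintype.card_coe]; omega)
  have hDD : LDD.PosDef := posDef_of_posSemidef_fromBlocks hK hker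
  have hM : M.PosSemidef := schurComplement_posSemidef hK hDD
  have hMsymm : M.IsSymm := isHermitian_iff_isSymm.mp hM.isHermitian
  have hMrow : M *ᵥ 1 = 0 :=
    schurComplement_mulVec_eq_zero (isUnit_iff_isUnit_det _ |>.mp hDD.isUnit) hrow
  refine ⟨hDD.isUnit, hMsymm, hM, schurComplement_apply_self_pos hK hker hDD,
    fun i j => schurComplement_apply_nonpos hZ hDD, fun i => ?_, fun j => ?_⟩
  · simpa [mulVec, dotProduct] using congrFun hMrow i
  · simpa [mulVec, dotProduct, hMsymm.apply] using congrFun hMrow j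

/-- **Schur complements of a connected graph Laplacian.**
Let `L = Δ - A` be the Laplacian of a connected undirected weighted graph on `n` nodes,
let `D` be a nonempty proper subset of the nodes whose complement `C = Dᶜ` has at least two
elements, and partition `L` into the blocks `L_CC, L_CD, L_DC, L_DD`.  Then `L_DD` is
invertible, and the Schur complement `M = L_CC - L_CD L_DD⁻¹ L_DC` is symmetric, positive
semidefinite, has strictly positive diagonal entries, nonpositive off-diagonal entries, and
zero row and column sums. -/
theorem schur_complement_of_connected_laplacian
    {n : ℕ} (a : Fin n → Fin n → ℝ)
    (hsym : ∀ i j, a i j = a j i)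
    (hnonneg : ∀ i j, 0 ≤ a i j)
    (hdiag : ∀ i, a i i = 0)
    (hconn : (SimpleGraph.fromRel fun i j => 0 < a i j).Connected)
    (D : Finset (Fin n)) (hDne : D.Nonempty) (hDproper : D ≠ Finset.univ)
    (hC : 2 ≤ Dᶜ.card) :
    let L : Matrix (Fin n) (Fin n) ℝ := fun i j => (if i = j then ∑ l, a i l else 0) - a i j
    let LDD : Matrix {i // i ∈ D} {i // i ∈ D} ℝ := fun i j => L i.1 j.1
    let LCC : Matrix {i // i ∈ Dᶜ} {i // i ∈ Dᶜ} ℝ := fun i j => L i.1 j.1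
    let LCD : Matrix {i // i ∈ Dᶜ} {i // i ∈ D} ℝ := fun i j => L i.1 j.1
    let LDC : Matrix {i // i ∈ D} {i // i ∈ Dᶜ} ℝ := fun i j => L i.1 j.1
    let M : Matrix {i // i ∈ Dᶜ} {i // i ∈ Dᶜ} ℝ := LCC - LCD * LDD⁻¹ * LDC
    IsUnit LDD ∧
    M.IsSymm ∧
    M.PosSemidef ∧
    (∀ i, 0 < M i i) ∧
    (∀ i j, i ≠ j → M i j ≤ 0) ∧
    (∀ i, ∑ j, M i j = 0) ∧
    (∀ j, ∑ i, M i j = 0) :=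
  schur_complement_of_connected_laplacian_general a hsym hnonneg hconn D hC
end

section
/- Let k ≥ 1 and p ∈ [1,∞]. The Filippov set-valued map of the direction-preserving signum sgn_p : ℝ^k → ℝ^k satisfies: F[sgn_p](w) = { w/‖w‖_p } for every w ≠ 0, and F[sgn_p](0) = { v ∈ ℝ^k : ‖v‖_p ≤ 1 }, the closed unit ball of the ℓ_p norm. -/
open MeasureTheory Set
open scoped ENNReal

noncomputable def eBall {ι : Type*} [Fintype ι] (x : ι → ℝ) (δ : ℝ) : Set (ι → ℝ) :=
  {y | Real.sqrt (∑ i, (y i - x i) ^ 2) < δ}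

noncomputable def filippov {ι κ : Type*} [Fintype ι] [Fintype κ]
    (h : (ι → ℝ) → (κ → ℝ)) (x : ι → ℝ) : Set (κ → ℝ) :=
  ⋂ (δ : ℝ) (_ : 0 < δ) (S : Set (ι → ℝ)) (_ : volume S = 0),
    closure (convexHull ℝ (h '' (eBall x δ \ S)))

noncomputable def lpNorm (p : ℝ≥0∞) {k : ℕ} (x : Fin k → ℝ) : ℝ :=
  if p = ∞ then ⨆ l, |x l| else (∑ l, |x l| ^ p.toReal) ^ (1 / p.toReal)

noncomputable def dpSign (p : ℝ≥0∞) {k : ℕ} (w : Fin k → ℝ) : Fin k → ℝ :=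
  if w = 0 then 0 else (lpNorm p w)⁻¹ • w

/-! Where `h` is continuous at `x`, discarding a null set cannot keep the values of `h` away from
`h x`, since nonempty open sets have positive measure; and shrinking `δ` squeezes the closed convex
hulls onto `h x`. So `F[h](x) = {h x}`, and `sgn_p` is continuous off `0`. At `0`, every unit
vector `u` equals `sgn_p (t • u)` for all `t > 0`, where `sgn_p` is continuous, so the unit sphere
lies in the convex set `F[sgn_p](0)` and hence so does its convex hull, the unit ball. Conversely
`sgn_p` takes values in the closed convex unit ball. -/

open Filter Metric Topology

section Filippov

variable {ι κ : Type*} [Fintype ι] [Fintype κ]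

lemma eBall_eq_preimage_ball (x : ι → ℝ) (δ : ℝ) :
    eBall x δ = WithLp.toLp 2 ⁻¹' ball (WithLp.toLp 2 x : EuclideanSpace ℝ ι) δ := by
  ext y
  simp [eBall, EuclideanSpace.dist_eq, Real.dist_eq, sq_abs]

lemma isOpen_eBall (x : ι → ℝ) (δ : ℝ) : IsOpen (eBall x δ) := by
  rw [eBall_eq_preimage_ball]
  exact isOpen_ball.preimage (PiLp.continuous_toLp 2 _)

lemma hasBasis_nhds_eBall (x : ι → ℝ) : (𝓝 x).HasBasis (0 < ·) (eBall x) := by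
  rw [show eBall x = _ from funext (eBall_eq_preimage_ball x)]
  exact (PiLp.homeomorph 2 fun _ : ι ↦ ℝ).symm.isInducing.basis_nhds nhds_basis_ball

lemma mem_closure_image_diff_of_null {X Y : Type*} [TopologicalSpace X] [MeasurableSpace X]
    [TopologicalSpace Y] (μ : Measure X) [μ.IsOpenPosMeasure] {h : X → Y} {x : X} {U S : Set X}
    (hU : U ∈ 𝓝 x) (hS : μ S = 0) (hh : ContinuousAt h x) :
    h x ∈ closure (h '' (U \ S)) := by
  have hSc : Dense Sᶜ := interior_eq_empty_iff_dense_compl.mp (μ.interior_eq_empty_of_null hS)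
  refine mem_closure_image hh (closure_mono ?_ (hSc.open_subset_closure_inter isOpen_interior
    (mem_interior_iff_mem_nhds.mpr hU)))
  exact inter_subset_inter_left _ interior_subset

lemma convex_filippov (h : (ι → ℝ) → (κ → ℝ)) (x : ι → ℝ) : Convex ℝ (filippov h x) :=
  convex_iInter fun _ ↦ convex_iInter fun _ ↦ convex_iInter fun _ ↦ convex_iInter fun _ ↦
    (convex_convexHull ℝ _).closure

lemma filippov_subset_of_mapsTo {h : (ι → ℝ) → (κ → ℝ)} {x : ι → ℝ} {δ : ℝ} {C : Set (κ → ℝ)}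
    (hδ : 0 < δ) (hC : IsClosed C) (hCc : Convex ℝ C) (hmaps : MapsTo h (eBall x δ) C) :
    filippov h x ⊆ C := by
  refine (iInter₂_subset_of_subset δ hδ (iInter₂_subset ∅ measure_empty)).trans ?_
  rw [sdiff_empty]
  exact closure_minimal (convexHull_min hmaps.image_subset hCc) hC

lemma mem_filippov_of_frequently {h : (ι → ℝ) → (κ → ℝ)} {x : ι → ℝ} {v : κ → ℝ}
    (hv : ∃ᶠ y in 𝓝 x, ContinuousAt h y ∧ h y = v) : v ∈ filippov h x := by
  simp only [filippov, mem_iInter]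
  intro δ hδ S hS
  obtain ⟨y, hy, hcont, rfl⟩ := frequently_iff.mp hv ((hasBasis_nhds_eBall x).mem_of_mem hδ)
  exact closure_mono (subset_convexHull ℝ _) (mem_closure_image_diff_of_null volume
    ((isOpen_eBall x δ).mem_nhds hy) hS hcont)

theorem filippov_eq_singleton_of_continuousAt {h : (ι → ℝ) → (κ → ℝ)} {x : ι → ℝ}
    (hh : ContinuousAt h x) : filippov h x = {h x} := by
  refine subset_antisymm (fun v hv ↦ eq_of_forall_dist_le fun ε hε ↦ ?_) ?_
  · obtain ⟨δ, hδ, hball⟩ := (hasBasis_nhds_eBall x).mem_iff.mp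
      (hh.preimage_mem_nhds (closedBall_mem_nhds (h x) hε))
    exact filippov_subset_of_mapsTo (h := h) hδ isClosed_closedBall (convex_closedBall _ _)
      (fun y hy ↦ hball hy) hv
  · exact singleton_subset_iff.mpr (mem_filippov_of_frequently
      ((frequently_pure.mpr ⟨hh, rfl⟩).filter_mono (pure_le_nhds x)))

end Filippov

section LpNorm

variable {p : ℝ≥0∞} {k : ℕ}

lemma lpNorm_eq_norm_toLp_of_ne_zero (hp : p ≠ 0) (x : Fin k → ℝ) :
    lpNorm p x = ‖WithLp.toLp p x‖ := by
  rcases eq_or_ne p ∞ with rfl | hp_top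
  · simp [_root_.lpNorm, PiLp.norm_eq_ciSup]
  · simp [_root_.lpNorm, hp_top, PiLp.norm_eq_sum (ENNReal.toReal_pos hp hp_top)]

lemma dpSign_eq_inv_smul (w : Fin k → ℝ) : dpSign p w = (lpNorm p w)⁻¹ • w := by
  by_cases hw : w = 0 <;> simp [dpSign, hw]

variable [Fact (1 ≤ p)]

lemma lpNorm_eq_norm_toLp (x : Fin k → ℝ) : lpNorm p x = ‖WithLp.toLp p x‖ :=
  lpNorm_eq_norm_toLp_of_ne_zero (zero_lt_one.trans_le Fact.out).ne' x

lemma continuous_lpNorm : Continuous (lpNorm p : (Fin k → ℝ) → ℝ) := by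
  simpa only [funext lpNorm_eq_norm_toLp] using (PiLp.continuous_toLp p _).norm

lemma lpNorm_smul (c : ℝ) (x : Fin k → ℝ) : lpNorm p (c • x) = |c| * lpNorm p x := by
  rw [lpNorm_eq_norm_toLp, lpNorm_eq_norm_toLp, WithLp.toLp_smul, norm_smul, Real.norm_eq_abs]

lemma lpNorm_pos {x : Fin k → ℝ} (hx : x ≠ 0) : 0 < lpNorm p x := by
  simpa [lpNorm_eq_norm_toLp] using hx

lemma setOf_lpNorm_le_one :
    {v : Fin k → ℝ | lpNorm p v ≤ 1} = WithLp.toLp p ⁻¹' closedBall 0 1 := by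
  ext v
  simp [lpNorm_eq_norm_toLp]

lemma isClosed_setOf_lpNorm_le_one : IsClosed {v : Fin k → ℝ | lpNorm p v ≤ 1} :=
  isClosed_le continuous_lpNorm continuous_const

lemma convex_setOf_lpNorm_le_one : Convex ℝ {v : Fin k → ℝ | lpNorm p v ≤ 1} := by
  rw [setOf_lpNorm_le_one]
  exact (convex_closedBall _ _).linear_preimage
    (WithLp.linearEquiv p ℝ (Fin k → ℝ)).symm.toLinearMap

lemma continuousAt_dpSign {w : Fin k → ℝ} (hw : w ≠ 0) : ContinuousAt (dpSign p) w := by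
  simp only [funext dpSign_eq_inv_smul]
  exact (continuous_lpNorm.continuousAt.inv₀ (lpNorm_pos hw).ne').smul continuousAt_id

lemma lpNorm_dpSign_le_one (w : Fin k → ℝ) : lpNorm p (dpSign p w) ≤ 1 := by
  rw [dpSign_eq_inv_smul, lpNorm_smul, lpNorm_eq_norm_toLp, abs_inv, abs_norm]
  exact inv_mul_le_one_of_le₀ le_rfl (norm_nonneg _)

lemma dpSign_smul_of_lpNorm_eq_one {u : Fin k → ℝ} (hu : lpNorm p u = 1) {t : ℝ} (ht : 0 < t) :
    dpSign p (t • u) = u := by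
  rw [dpSign_eq_inv_smul, lpNorm_smul, abs_of_pos ht, hu, mul_one, smul_smul,
    inv_mul_cancel₀ ht.ne', one_smul]

end LpNorm

section DpSign

variable {p : ℝ≥0∞} [Fact (1 ≤ p)] {k : ℕ}

lemma mem_filippov_dpSign_zero_of_lpNorm_eq_one {u : Fin k → ℝ} (hu : lpNorm p u = 1) :
    u ∈ filippov (dpSign p) 0 := by
  have hu0 : u ≠ 0 := by
    rintro rfl
    simp [lpNorm_eq_norm_toLp] at hu
  have hray : Tendsto (fun t : ℝ ↦ t • u) (𝓝[>] 0) (𝓝 0) :=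
    tendsto_nhdsWithin_of_tendsto_nhds
      ((continuous_id.smul (continuous_const (y := u))).tendsto' 0 0 (zero_smul ℝ u))
  refine mem_filippov_of_frequently (hray.frequently (Eventually.frequently ?_))
  filter_upwards [self_mem_nhdsWithin] with t (ht : 0 < t)
  exact ⟨continuousAt_dpSign (smul_ne_zero ht.ne' hu0), dpSign_smul_of_lpNorm_eq_one hu ht⟩

theorem filippov_dpSign_zero [NeZero k] :
    filippov (dpSign p) (0 : Fin k → ℝ) = {v | lpNorm p v ≤ 1} := by
  refine subset_antisymm ?_ fun v hv ↦ ?_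
  · exact filippov_subset_of_mapsTo one_pos isClosed_setOf_lpNorm_le_one
      convex_setOf_lpNorm_le_one fun w _ ↦ lpNorm_dpSign_le_one w
  · rw [setOf_lpNorm_le_one, mem_preimage,
      ← convexHull_sphere_eq_closedBall 0 zero_le_one] at hv
    refine convexHull_min (t := WithLp.ofLp ⁻¹' filippov (dpSign p) 0) (fun u hu ↦ ?_)
      ((convex_filippov _ _).linear_preimage (WithLp.linearEquiv p ℝ (Fin k → ℝ)).toLinearMap) hv
    exact mem_filippov_dpSign_zero_of_lpNorm_eq_one (by simpa [lpNorm_eq_norm_toLp] using hu)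

end DpSign

/-- **Filippov set-valued map of the direction-preserving signum.**
For `k ≥ 1` and `p ∈ [1, ∞]`, the Filippov set-valued map of `sgn_p` is the singleton
`{w / ‖w‖_p}` at every `w ≠ 0`, and at `0` it is the closed unit ball of the `ℓ_p` norm. -/
theorem filippov_dpSign {k : ℕ} (hk : 1 ≤ k) (p : ℝ≥0∞) (hp : 1 ≤ p) :
    (∀ w : Fin k → ℝ, w ≠ 0 →
      filippov (dpSign p) w = {(lpNorm p w)⁻¹ • w}) ∧
    filippov (dpSign p) (0 : Fin k → ℝ) = {v : Fin k → ℝ | lpNorm p v ≤ 1} := by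
  have : Fact (1 ≤ p) := ⟨hp⟩
  have : NeZero k := ⟨Nat.one_le_iff_ne_zero.mp hk⟩
  refine ⟨fun w hw ↦ ?_, filippov_dpSign_zero⟩
  rw [filippov_eq_singleton_of_continuousAt (continuousAt_dpSign hw), dpSign_eq_inv_smul]
end

section
/- Let f_j : ℝ^m → ℝ^{n_j}, j = 1,…,N, be locally bounded maps. Then for every x ∈ ℝ^m, the Filippov set-valued map of the combined map (f_1,…,f_N) : ℝ^m → ℝ^{n_1+⋯+n_N} satisfies F[(f_1,…,f_N)](x) ⊆ F[f_1](x) × ⋯ × F[f_N](x). -/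
open MeasureTheory Set
open scoped ENNReal

/-- A map between finite-dimensional real coordinate spaces is locally bounded. -/
def LocBounded {ι κ : Type*} [Fintype ι] [Fintype κ] (f : (ι → ℝ) → (κ → ℝ)) : Prop :=
  ∀ x : ι → ℝ, ∃ δ : ℝ, 0 < δ ∧ Bornology.IsBounded (f '' eBall x δ)

/-- **Product rule for the Filippov set-valued map (Proposition 1(1)).**
For locally bounded maps `f_j : ℝ^m → ℝ^{n_j}`, `j = 1, …, N`,
`F[(f_1, …, f_N)](x) ⊆ F[f_1](x) × ⋯ × F[f_N](x)`. -/
theorem filippov_prod_subset {m N : ℕ} (nd : Fin N → ℕ)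
    (f : ∀ j : Fin N, (Fin m → ℝ) → (Fin (nd j) → ℝ))
    (hf : ∀ j, LocBounded (f j))
    (x : Fin m → ℝ) :
    filippov (fun y => fun jl : Σ j : Fin N, Fin (nd j) => f jl.1 y jl.2) x ⊆
      {v : (Σ j : Fin N, Fin (nd j)) → ℝ |
        ∀ j : Fin N, (fun l => v ⟨j, l⟩) ∈ filippov (f j) x} := by
  intro v hv j
  simp only [filippov, mem_iInter, mem_setOf_eq] at hv ⊢
  intro δ hδ S hS
  set π : ((Σ j : Fin N, Fin (nd j)) → ℝ) →L[ℝ] (Fin (nd j) → ℝ) :=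
    ContinuousLinearMap.pi fun l => ContinuousLinearMap.proj (⟨j, l⟩ : Σ j, Fin (nd j))
  have h1 := hv δ hδ S hS
  have h2 : π v ∈ closure (π '' convexHull ℝ
      ((fun y => fun jl : Σ j : Fin N, Fin (nd j) => f jl.1 y jl.2) '' (eBall x δ \ S))) :=
    image_closure_subset_closure_image π.continuous (mem_image_of_mem π h1)
  have h3 : π '' convexHull ℝ
      ((fun y => fun jl : Σ j : Fin N, Fin (nd j) => f jl.1 y jl.2) '' (eBall x δ \ S))
      = convexHull ℝ (f j '' (eBall x δ \ S)) := by
    have h4 := π.toLinearMap.image_convexHull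
      ((fun y => fun jl : Σ j : Fin N, Fin (nd j) => f jl.1 y jl.2) '' (eBall x δ \ S))
    simp only [ContinuousLinearMap.coe_coe] at h4
    rw [h4, ← image_comp]
    rfl
  rw [h3] at h2
  exact h2
end

section
/- Fix p ∈ [1,∞] and consider the two-agent system h : ℝ^{2k} → ℝ^{2k}, h(x₁,x₂) = (sgn_p(x₂ − x₁), sgn_p(x₁ − x₂)). For every x = (x₁,x₂) with x₁ = x₂, every element ν = (ν₁,ν₂) of the Filippov set-valued map F[h](x) satisfies ν₁ = −ν₂. -/
open MeasureTheory Set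
open scoped ENNReal

/-! The Filippov set only ever takes closed convex hulls of values of `h`, so any closed convex
set containing all values of `h` contains `F[h](x)`. For the two-agent field, `sgn_p` is odd, so
every value `(sgn_p(x₂ - x₁), sgn_p(x₁ - x₂))` lies in the closed subspace `{ν | ν₁ = -ν₂}`. -/

lemma lpNorm_neg (p : ℝ≥0∞) {k : ℕ} (w : Fin k → ℝ) : lpNorm p (-w) = lpNorm p w := by
  simp [_root_.lpNorm]

lemma dpSign_neg (p : ℝ≥0∞) {k : ℕ} (w : Fin k → ℝ) : dpSign p (-w) = -dpSign p w := by
  by_cases hw : w = 0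
  · simp [dpSign, hw]
  · simp [dpSign, hw, lpNorm_neg]

lemma filippov_subset_of_forall_mem {ι κ : Type*} [Fintype ι] [Fintype κ]
    {h : (ι → ℝ) → (κ → ℝ)} {C : Set (κ → ℝ)} (hconv : Convex ℝ C) (hclosed : IsClosed C)
    (hC : ∀ y, h y ∈ C) (x : ι → ℝ) : filippov h x ⊆ C := by
  intro ν hν
  have hν₁ : ν ∈ closure (convexHull ℝ (h '' (eBall x 1 \ ∅))) := by
    simp only [filippov, mem_iInter] at hν
    exact hν 1 one_pos ∅ measure_empty
  refine closure_minimal (convexHull_min ?_ hconv) hclosed hν₁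
  rintro _ ⟨y, -, rfl⟩
  exact hC y

def pairAntidiagonal (ι : Type*) : Submodule ℝ (Fin 2 × ι → ℝ) where
  carrier := {ν | ∀ l, ν (0, l) = -ν (1, l)}
  add_mem' hu hv l := by simp [hu l, hv l, add_comm]
  zero_mem' _ := by simp
  smul_mem' c _ hv l := by simp [hv l]

theorem filippov_two_agent_antisymmetric_general {k : ℕ} (p : ℝ≥0∞) :
    let h : (Fin 2 × Fin k → ℝ) → (Fin 2 × Fin k → ℝ) :=
      fun x il =>
        if il.1 = 0 then dpSign p (fun l => x (1, l) - x (0, l)) il.2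
        else dpSign p (fun l => x (0, l) - x (1, l)) il.2
    ∀ x : Fin 2 × Fin k → ℝ, (∀ l : Fin k, x (0, l) = x (1, l)) →
      ∀ ν ∈ filippov h x, ∀ l : Fin k, ν (0, l) = -ν (1, l) := by
  intro h x _
  have h_mem : ∀ y, h y ∈ pairAntidiagonal (Fin k) := by
    intro y l
    have hodd : (fun l => y (0, l) - y (1, l)) = -fun l => y (1, l) - y (0, l) := by
      funext; simp
    simp [h, hodd, dpSign_neg]
  exact filippov_subset_of_forall_mem (pairAntidiagonal (Fin k)).convex
    (Submodule.closed_of_finiteDimensional _) h_mem x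

/-- **Antisymmetry of the Filippov set on the diagonal for the two-agent system.**
For the two-agent system `h(x₁, x₂) = (sgn_p(x₂ - x₁), sgn_p(x₁ - x₂))` and any point
with `x₁ = x₂`, every element `ν = (ν₁, ν₂)` of `F[h](x)` satisfies `ν₁ = -ν₂`. -/
theorem filippov_two_agent_antisymmetric {k : ℕ} (p : ℝ≥0∞) (hp : 1 ≤ p) :
    let h : (Fin 2 × Fin k → ℝ) → (Fin 2 × Fin k → ℝ) :=
      fun x il =>
        if il.1 = 0 then dpSign p (fun l => x (1, l) - x (0, l)) il.2
        else dpSign p (fun l => x (0, l) - x (1, l)) il.2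
    ∀ x : Fin 2 × Fin k → ℝ, (∀ l : Fin k, x (0, l) = x (1, l)) →
      ∀ ν ∈ filippov h x, ∀ l : Fin k, ν (0, l) = -ν (1, l) :=
  filippov_two_agent_antisymmetric_general p
end
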